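/- Let n ≥ 1, s < 0 and 0 < q, r ≤ ∞. There exist constants 0 < c ≤ C depending only on n, s, q, r such that for every measurable function f on ℝⁿ, c·‖f‖_{K̇^s_{q,r}} ≤ (∑_{j∈ℤ} [2^{js} ‖f·χ_{B(0,2^j)}‖_{L^q(ℝⁿ)}]^r)^{1/r} ≤ C·‖f‖_{K̇^s_{q,r}} (with the sum replaced by sup_{j∈ℤ} 2^{js} ‖f·χ_{B(0,2^j)}‖_{L^q} when r = ∞), where B(0,2^j) = {x ∈ ℝⁿ : |x| < 2^j}. -/

import Mathlib

/-!
Up to the centre, which is a null set since `n ≥ 1`, the ball `B(0, 2^j)` is the disjoint union of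
the annuli `A_{j-m}`, `m ≥ 0`. Hence `‖f χ_B‖_q^Q ≤ ∑_m ‖f χ_{A_{j-m}}‖_q^Q` with `Q = q`
(`Q = 1` if `q = ∞`), and since `2^{js} = 2^{ms} 2^{(j-m)s}` the weighted ball norms `b_j` satisfy
`b_j^Q ≤ ∑_m 2^{msQ} a_{j-m}^Q` in terms of the weighted annulus norms `a_j`. For `s < 0` this is a
convolution with a geometric kernel, which is bounded on every `ℓ^r`. The lower bound, with
constant `1`, is just `A_j ⊆ B(0, 2^j)`.
-/

open MeasureTheory Set ENNReal Filter

noncomputable section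

abbrev Euc (n : ℕ) : Type := EuclideanSpace ℝ (Fin n)

def annulus (n : ℕ) (j : ℤ) : Set (Euc n) :=
  {x : Euc n | (2 : ℝ) ^ (j - 1) ≤ ‖x‖ ∧ ‖x‖ < (2 : ℝ) ^ j}

def herzNorm (n : ℕ) (s : ℝ) (q r : ℝ≥0∞) (f : Euc n → ℝ) : ℝ≥0∞ :=
  if r = ⊤ then
    ⨆ j : ℤ, ENNReal.ofReal ((2 : ℝ) ^ ((j : ℝ) * s)) *
      eLpNorm ((annulus n j).indicator f) q volume
  else
    (∑' j : ℤ, (ENNReal.ofReal ((2 : ℝ) ^ ((j : ℝ) * s)) *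
      eLpNorm ((annulus n j).indicator f) q volume) ^ r.toReal) ^ (1 / r.toReal)

/-- The Herz quasi-norm in which the annuli `A_j` are replaced by the balls `B(0, 2^j)`. -/
def herzBallNorm (n : ℕ) (s : ℝ) (q r : ℝ≥0∞) (f : Euc n → ℝ) : ℝ≥0∞ :=
  if r = ⊤ then
    ⨆ j : ℤ, ENNReal.ofReal ((2 : ℝ) ^ ((j : ℝ) * s)) *
      eLpNorm (({x : Euc n | ‖x‖ < (2 : ℝ) ^ j}).indicator f) q volume
  else
    (∑' j : ℤ, (ENNReal.ofReal ((2 : ℝ) ^ ((j : ℝ) * s)) *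
      eLpNorm (({x : Euc n | ‖x‖ < (2 : ℝ) ^ j}).indicator f) q volume) ^ r.toReal) ^ (1 / r.toReal)

namespace ENNReal

theorem tsum_geometric_mul_le_iSup (u : ℝ≥0∞) (z : ℕ → ℝ≥0∞) :
    ∑' m, u ^ m * z m ≤ (1 - u)⁻¹ * ⨆ m, z m :=
  calc ∑' m, u ^ m * z m ≤ ∑' m, u ^ m * ⨆ k, z k := by gcongr with m; exact le_iSup z m
    _ = (1 - u)⁻¹ * ⨆ m, z m := by rw [ENNReal.tsum_mul_right, ENNReal.tsum_geometric]

theorem iSup_rpow_le_tsum_rpow {ι : Type*} (z : ι → ℝ≥0∞) {t : ℝ} (ht : 0 < t) :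
    (⨆ i, z i) ^ t ≤ ∑' i, z i ^ t := by
  rw [← orderIsoRpow_apply t ht, OrderIso.map_iSup]
  exact iSup_le fun i => ENNReal.le_tsum i

theorem tsum_tsum_geometric_mul_sub (v : ℝ≥0∞) (z : ℤ → ℝ≥0∞) :
    ∑' j : ℤ, ∑' m : ℕ, v ^ m * z (j - m) = (1 - v)⁻¹ * ∑' j, z j := by
  rw [ENNReal.tsum_comm, ← ENNReal.tsum_geometric, ← ENNReal.tsum_mul_right]
  refine tsum_congr fun m => ?_
  rw [ENNReal.tsum_mul_left]
  exact congrArg _ ((Equiv.subRight (m : ℤ)).tsum_eq z)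

/-- Splitting `w ^ m = u ^ m * u ^ m` with `u = w ^ (1/2)`, one factor bounds the convolution by a
supremum, and a supremum is dominated in `ℓ^t` for every `t > 0`, including `t < 1`. -/
theorem tsum_rpow_le_of_le_tsum_geometric {w : ℝ≥0∞} {t : ℝ} (ht : 0 < t) (x y : ℤ → ℝ≥0∞)
    (hy : ∀ j, y j ≤ ∑' m : ℕ, w ^ m * x (j - m)) :
    ∑' j, y j ^ t ≤
      (1 - w ^ (1 / 2 : ℝ))⁻¹ ^ t * (1 - w ^ (t / 2))⁻¹ * ∑' j, x j ^ t := by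
  set u := w ^ (1 / 2 : ℝ)
  have hpow : ∀ m : ℕ, (u ^ m) ^ t = (w ^ (t / 2)) ^ m := fun m => by
    rw [← ENNReal.rpow_natCast_mul, ← ENNReal.rpow_mul, ← ENNReal.rpow_mul_natCast]
    ring_nf
  have hsq : ∀ m : ℕ, w ^ m = u ^ m * u ^ m := fun m => by
    rw [← mul_pow, ← ENNReal.rpow_add_of_nonneg _ _ (by norm_num) (by norm_num)]
    norm_num
  have hpoint : ∀ j, y j ^ t ≤
      (1 - u)⁻¹ ^ t * ∑' m : ℕ, (w ^ (t / 2)) ^ m * x (j - m) ^ t := fun j =>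
    calc y j ^ t ≤ ((1 - u)⁻¹ * ⨆ m : ℕ, u ^ m * x (j - m)) ^ t := by
          gcongr
          refine (hy j).trans ?_
          simp_rw [hsq, mul_assoc]
          exact tsum_geometric_mul_le_iSup u _
      _ ≤ (1 - u)⁻¹ ^ t * ∑' m : ℕ, (u ^ m * x (j - m)) ^ t := by
          rw [ENNReal.mul_rpow_of_nonneg _ _ ht.le]
          gcongr
          exact iSup_rpow_le_tsum_rpow _ ht
      _ = (1 - u)⁻¹ ^ t * ∑' m : ℕ, (w ^ (t / 2)) ^ m * x (j - m) ^ t := by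
          simp_rw [ENNReal.mul_rpow_of_nonneg _ _ ht.le, hpow]
  calc ∑' j, y j ^ t ≤ ∑' j, (1 - u)⁻¹ ^ t * ∑' m : ℕ, (w ^ (t / 2)) ^ m * x (j - m) ^ t :=
        ENNReal.tsum_le_tsum hpoint
    _ = _ := by
        rw [ENNReal.tsum_mul_left, tsum_tsum_geometric_mul_sub (z := fun j => x j ^ t), mul_assoc]

theorem iSup_le_of_rpow_le_tsum_geometric {w : ℝ≥0∞} {Q : ℝ} (hQ : 0 < Q) (a b : ℤ → ℝ≥0∞)
    (hab : ∀ j, b j ^ Q ≤ ∑' m : ℕ, w ^ m * a (j - m) ^ Q) :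
    ⨆ j, b j ≤ (1 - w)⁻¹ ^ (1 / Q) * ⨆ j, a j := by
  refine iSup_le fun j => ?_
  have hbj : b j ^ Q ≤ (1 - w)⁻¹ * (⨆ k, a k) ^ Q :=
    calc b j ^ Q ≤ (1 - w)⁻¹ * ⨆ m : ℕ, a (j - m) ^ Q :=
          (hab j).trans (tsum_geometric_mul_le_iSup w _)
      _ ≤ (1 - w)⁻¹ * (⨆ k, a k) ^ Q := by
          gcongr
          exact iSup_le fun m => by gcongr; exact le_iSup a _
  calc b j = (b j ^ Q) ^ (1 / Q) := by
        rw [← ENNReal.rpow_mul, mul_one_div_cancel hQ.ne', ENNReal.rpow_one]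
    _ ≤ ((1 - w)⁻¹ * (⨆ k, a k) ^ Q) ^ (1 / Q) := by gcongr
    _ = (1 - w)⁻¹ ^ (1 / Q) * ⨆ k, a k := by
        rw [ENNReal.mul_rpow_of_nonneg _ _ (by positivity), ← ENNReal.rpow_mul,
          mul_one_div_cancel hQ.ne', ENNReal.rpow_one]

end ENNReal

def seqLpNorm (r : ℝ≥0∞) (a : ℤ → ℝ≥0∞) : ℝ≥0∞ :=
  if r = ⊤ then ⨆ j, a j else (∑' j, a j ^ r.toReal) ^ (1 / r.toReal)

theorem seqLpNorm_mono {r : ℝ≥0∞} {a b : ℤ → ℝ≥0∞} (hab : a ≤ b) :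
    seqLpNorm r a ≤ seqLpNorm r b := by
  unfold seqLpNorm
  split_ifs
  · exact iSup_mono hab
  · gcongr with j
    exact hab j

theorem seqLpNorm_le_of_rpow_le_tsum_geometric {w : ℝ≥0∞} (hw : w < 1) {Q : ℝ} (hQ : 0 < Q)
    {r : ℝ≥0∞} (hr : 0 < r) :
    ∃ K ≠ ⊤, ∀ a b : ℤ → ℝ≥0∞, (∀ j, b j ^ Q ≤ ∑' m : ℕ, w ^ m * a (j - m) ^ Q) →
      seqLpNorm r b ≤ K * seqLpNorm r a := by
  have hne : ∀ v : ℝ≥0∞, v < 1 → (1 - v)⁻¹ ≠ ⊤ := fun v hv =>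
    ENNReal.inv_ne_top.2 (tsub_pos_of_lt hv).ne'
  by_cases hrt : r = ⊤
  · refine ⟨(1 - w)⁻¹ ^ (1 / Q), ENNReal.rpow_ne_top_of_nonneg (by positivity) (hne w hw),
      fun a b hab => ?_⟩
    simpa only [seqLpNorm, if_pos hrt] using ENNReal.iSup_le_of_rpow_le_tsum_geometric hQ a b hab
  · set R := r.toReal
    have hR : 0 < R := ENNReal.toReal_pos hr.ne' hrt
    have hRQ : 0 < R / Q := div_pos hR hQ
    set K := (1 - w ^ (1 / 2 : ℝ))⁻¹ ^ (R / Q) * (1 - w ^ (R / Q / 2))⁻¹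
    have hK : K ≠ ⊤ := ENNReal.mul_ne_top
      (ENNReal.rpow_ne_top_of_nonneg hRQ.le (hne _ (ENNReal.rpow_lt_one hw (by norm_num))))
      (hne _ (ENNReal.rpow_lt_one hw (by positivity)))
    refine ⟨K ^ (1 / R), ENNReal.rpow_ne_top_of_nonneg (by positivity) hK, fun a b hab => ?_⟩
    have hpow : ∀ c : ℝ≥0∞, (c ^ Q) ^ (R / Q) = c ^ R := fun c => by
      rw [← ENNReal.rpow_mul, mul_div_cancel₀ _ hQ.ne']
    have hsum : ∑' j, b j ^ R ≤ K * ∑' j, a j ^ R := by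
      simpa only [hpow] using ENNReal.tsum_rpow_le_of_le_tsum_geometric hRQ
        (fun j => a j ^ Q) (fun j => b j ^ Q) hab
    simp only [seqLpNorm, if_neg hrt]
    calc (∑' j, b j ^ R) ^ (1 / R) ≤ (K * ∑' j, a j ^ R) ^ (1 / R) := by gcongr
      _ = K ^ (1 / R) * (∑' j, a j ^ R) ^ (1 / R) :=
          ENNReal.mul_rpow_of_nonneg _ _ (by positivity)

section IndicatorUnion

variable {α ι E : Type*} [MeasurableSpace α] {μ : Measure α} [NormedAddCommGroup E] [Countable ι]
  {s : ι → Set α}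

theorem eLpNorm_indicator_iUnion_rpow (hs : ∀ i, MeasurableSet (s i))
    (hd : Pairwise (Function.onFun Disjoint s)) (f : α → E) {q : ℝ≥0∞} (hq0 : q ≠ 0)
    (hq : q ≠ ⊤) :
    eLpNorm ((⋃ i, s i).indicator f) q μ ^ q.toReal =
      ∑' i, eLpNorm ((s i).indicator f) q μ ^ q.toReal := by
  have hlint : ∀ t, MeasurableSet t →
      eLpNorm (t.indicator f) q μ ^ q.toReal = ∫⁻ x in t, ‖f x‖ₑ ^ q.toReal ∂μ := fun t ht => by
    rw [eLpNorm_indicator_eq_eLpNorm_restrict ht, eLpNorm_eq_lintegral_rpow_enorm_toReal hq0 hq,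
      ← ENNReal.rpow_mul, one_div_mul_cancel (ENNReal.toReal_pos hq0 hq).ne', ENNReal.rpow_one]
  rw [hlint _ (MeasurableSet.iUnion hs), lintegral_iUnion hs hd]
  exact tsum_congr fun i => (hlint _ (hs i)).symm

theorem eLpNorm_top_indicator_iUnion_le (f : α → E) :
    eLpNorm ((⋃ i, s i).indicator f) ⊤ μ ≤ ⨆ i, eLpNorm ((s i).indicator f) ⊤ μ := by
  simp only [eLpNorm_exponent_top]
  refine eLpNormEssSup_le_of_ae_enorm_bound ?_
  filter_upwards [ae_all_iff.2 fun i => ae_le_eLpNormEssSup (f := (s i).indicator f) (μ := μ)]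
    with x hx
  by_cases hxs : x ∈ ⋃ i, s i
  · obtain ⟨i, hi⟩ := mem_iUnion.1 hxs
    rw [indicator_of_mem hxs, ← indicator_of_mem hi f]
    exact (hx i).trans (le_iSup (fun i => eLpNormEssSup ((s i).indicator f) μ) i)
  · simp [indicator_of_notMem hxs]

end IndicatorUnion

theorem annulus_subset_ball (n : ℕ) (j : ℤ) : annulus n j ⊆ {x : Euc n | ‖x‖ < (2 : ℝ) ^ j} :=
  fun _ hx => hx.2

theorem measurableSet_annulus (n : ℕ) (j : ℤ) : MeasurableSet (annulus n j) :=
  (measurableSet_le measurable_const measurable_norm).inter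
    (measurableSet_lt measurable_norm measurable_const)

theorem pairwise_disjoint_annulus (n : ℕ) : Pairwise (Function.onFun Disjoint (annulus n)) := by
  have hlt : ∀ {i k : ℤ}, i < k → Disjoint (annulus n i) (annulus n k) := fun {i k} hik =>
    Set.disjoint_left.2 fun x hi hk =>
      (hi.2.trans_le ((zpow_le_zpow_right₀ one_le_two (by omega)).trans hk.1)).false
  intro i k hik
  rcases hik.lt_or_gt with h | h
  · exact hlt h
  · exact (hlt h).symm

theorem ball_diff_zero_eq_iUnion_annulus (n : ℕ) (j : ℤ) :
    {x : Euc n | ‖x‖ < (2 : ℝ) ^ j} \ {0} = ⋃ m : ℕ, annulus n (j - m) := by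
  ext x
  simp only [annulus, Set.mem_sdiff, mem_ofPred_eq, mem_singleton_iff, mem_iUnion]
  constructor
  · rintro ⟨hxj, hx0⟩
    obtain ⟨k, hk⟩ := exists_mem_Ico_zpow (norm_pos_iff.2 hx0) one_lt_two
    have hkj : k + 1 ≤ j := by
      by_contra! h
      exact (hxj.trans_le ((zpow_le_zpow_right₀ one_le_two (by omega)).trans hk.1)).false
    refine ⟨(j - (k + 1)).toNat, ?_, ?_⟩
    · rw [show j - ((j - (k + 1)).toNat : ℤ) - 1 = k by omega]
      exact hk.1
    · rw [show j - ((j - (k + 1)).toNat : ℤ) = k + 1 by omega]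
      exact hk.2
  · rintro ⟨m, hm1, hm2⟩
    refine ⟨hm2.trans_le (zpow_le_zpow_right₀ one_le_two (by omega)), fun hx0 => ?_⟩
    rw [hx0, norm_zero] at hm1
    exact (zpow_pos (two_pos (α := ℝ)) _).not_ge hm1

theorem exists_eLpNorm_ball_rpow_le_tsum_annulus {n : ℕ} (hn : 1 ≤ n) {q : ℝ≥0∞} (hq : 0 < q) :
    ∃ Q : ℝ, 0 < Q ∧ ∀ (f : Euc n → ℝ) (j : ℤ),
      eLpNorm ({x : Euc n | ‖x‖ < (2 : ℝ) ^ j}.indicator f) q volume ^ Q ≤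
        ∑' m : ℕ, eLpNorm ((annulus n (j - m)).indicator f) q volume ^ Q := by
  have : Nontrivial (Euc n) := by
    have : Nonempty (Fin n) := ⟨⟨0, hn⟩⟩
    infer_instance
  have hball : ∀ (f : Euc n → ℝ) (j : ℤ),
      eLpNorm ({x : Euc n | ‖x‖ < (2 : ℝ) ^ j}.indicator f) q volume =
        eLpNorm ((⋃ m : ℕ, annulus n (j - m)).indicator f) q volume := fun f j => by
    rw [← ball_diff_zero_eq_iUnion_annulus]
    exact eLpNorm_congr_ae (indicator_ae_eq_of_ae_eq_set (sdiff_null_ae_eq_self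
      (measure_singleton 0)).symm)
  by_cases hqt : q = ⊤
  · subst hqt
    refine ⟨1, one_pos, fun f j => ?_⟩
    simp only [ENNReal.rpow_one, hball]
    exact (eLpNorm_top_indicator_iUnion_le f).trans (iSup_le ENNReal.le_tsum)
  · refine ⟨q.toReal, ENNReal.toReal_pos hq.ne' hqt, fun f j => ?_⟩
    rw [hball, eLpNorm_indicator_iUnion_rpow (fun m => measurableSet_annulus n _)
      ((pairwise_disjoint_annulus n).comp_of_injective fun m k h => by simpa using h) f hq.ne' hqt]

theorem ofReal_two_rpow_rpow_eq (s Q : ℝ) (j : ℤ) (m : ℕ) :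
    ENNReal.ofReal ((2 : ℝ) ^ ((j : ℝ) * s)) ^ Q =
      ENNReal.ofReal ((2 : ℝ) ^ (s * Q)) ^ m *
        ENNReal.ofReal ((2 : ℝ) ^ (((j - m : ℤ) : ℝ) * s)) ^ Q := by
  have h2 : ∀ x : ℝ, 0 < (2 : ℝ) ^ x := fun x => Real.rpow_pos_of_pos two_pos x
  rw [ENNReal.ofReal_rpow_of_pos (h2 _), ENNReal.ofReal_rpow_of_pos (h2 _),
    ← ENNReal.ofReal_pow (h2 _).le, ← ENNReal.ofReal_mul (by positivity), ← Real.rpow_mul two_pos.le,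
    ← Real.rpow_mul two_pos.le, ← Real.rpow_mul_natCast two_pos.le, ← Real.rpow_add two_pos]
  push_cast
  ring_nf

theorem ofReal_two_rpow_mul_rpow_le {s Q : ℝ} (hQ : 0 ≤ Q) {u v : ℤ → ℝ≥0∞}
    (huv : ∀ j, u j ^ Q ≤ ∑' m : ℕ, v (j - m) ^ Q) (j : ℤ) :
    (ENNReal.ofReal ((2 : ℝ) ^ ((j : ℝ) * s)) * u j) ^ Q ≤
      ∑' m : ℕ, ENNReal.ofReal ((2 : ℝ) ^ (s * Q)) ^ m *
        (ENNReal.ofReal ((2 : ℝ) ^ (((j - m : ℤ) : ℝ) * s)) * v (j - m)) ^ Q :=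
  calc (ENNReal.ofReal ((2 : ℝ) ^ ((j : ℝ) * s)) * u j) ^ Q
      ≤ ENNReal.ofReal ((2 : ℝ) ^ ((j : ℝ) * s)) ^ Q * ∑' m : ℕ, v (j - m) ^ Q := by
        rw [ENNReal.mul_rpow_of_nonneg _ _ hQ]
        gcongr
        exact huv j
    _ = _ := by
        rw [← ENNReal.tsum_mul_left]
        refine tsum_congr fun m => ?_
        rw [ENNReal.mul_rpow_of_nonneg _ _ hQ, ofReal_two_rpow_rpow_eq s Q j m, mul_assoc]

theorem ofReal_two_rpow_lt_one {x : ℝ} (hx : x < 0) : ENNReal.ofReal ((2 : ℝ) ^ x) < 1 :=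
  ENNReal.ofReal_lt_one.2 (Real.rpow_lt_one_of_one_lt_of_neg one_lt_two hx)

theorem herzNorm_eq_seqLpNorm (n : ℕ) (s : ℝ) (q r : ℝ≥0∞) (f : Euc n → ℝ) :
    herzNorm n s q r f = seqLpNorm r fun j =>
      ENNReal.ofReal ((2 : ℝ) ^ ((j : ℝ) * s)) * eLpNorm ((annulus n j).indicator f) q volume :=
  rfl

theorem herzBallNorm_eq_seqLpNorm (n : ℕ) (s : ℝ) (q r : ℝ≥0∞) (f : Euc n → ℝ) :
    herzBallNorm n s q r f = seqLpNorm r fun j => ENNReal.ofReal ((2 : ℝ) ^ ((j : ℝ) * s)) *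
      eLpNorm ({x : Euc n | ‖x‖ < (2 : ℝ) ^ j}.indicator f) q volume :=
  rfl

/-- For `s < 0`, the Herz quasi-norm is equivalent to its variant defined with balls
`B(0, 2^j)` in place of the annuli `A_j`. -/
theorem herzNorm_equiv_herzBallNorm
    (n : ℕ) (hn : 1 ≤ n) (s : ℝ) (hs : s < 0) (q r : ℝ≥0∞) (hq : 0 < q) (hr : 0 < r) :
    ∃ c C : ℝ, 0 < c ∧ c ≤ C ∧
      ∀ f : Euc n → ℝ, Measurable f →
        ENNReal.ofReal c * herzNorm n s q r f ≤ herzBallNorm n s q r f ∧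
          herzBallNorm n s q r f ≤ ENNReal.ofReal C * herzNorm n s q r f := by
  obtain ⟨Q, hQ, hball⟩ := exists_eLpNorm_ball_rpow_le_tsum_annulus hn hq
  obtain ⟨K, hK, hconv⟩ := seqLpNorm_le_of_rpow_le_tsum_geometric
    (ofReal_two_rpow_lt_one (mul_neg_of_neg_of_pos hs hQ)) hQ hr
  refine ⟨1, max K.toReal 1, one_pos, le_max_right _ _, fun f _ => ⟨?_, ?_⟩⟩
  · rw [ENNReal.ofReal_one, one_mul, herzNorm_eq_seqLpNorm, herzBallNorm_eq_seqLpNorm]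
    exact seqLpNorm_mono fun j => by
      gcongr
      exact eLpNorm_mono fun x => norm_indicator_le_of_subset (annulus_subset_ball n j) f x
  calc herzBallNorm n s q r f ≤ K * herzNorm n s q r f :=
        hconv _ _ <| ofReal_two_rpow_mul_rpow_le hQ.le
          (v := fun k => eLpNorm ((annulus n k).indicator f) q volume) (hball f)
    _ ≤ ENNReal.ofReal (max K.toReal 1) * herzNorm n s q r f := by
        gcongr
        exact ENNReal.le_ofReal_iff_toReal_le hK (by positivity) |>.2 (le_max_left _ _)
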